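/- With the setup of the standard compactification of (ℝˢ, d_E), every Cauchy sequence in (ℝˢ, d^φ) that is not equivalent to a constant Cauchy sequence is equivalent to the sequence (aᵢ·x)ᵢ for some unit vector x (two Cauchy sequences (xᵢ), (yᵢ) being equivalent iff d^φ(xᵢ,yᵢ) → 0). -/

import Mathlib

noncomputable def deltaPhi {X : Type*} [MetricSpace X] (m : X) (φ : X → X → ℝ) (x y : X) : ℝ :=
  min (dist x y) (1 / (1 + dist m x) + φ x y + 1 / (1 + dist m y))

noncomputable def dPhi {X : Type*} [MetricSpace X] (m : X) (φ : X → X → ℝ) (x y : X) : ℝ :=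
  sInf { r : ℝ | ∃ (n : ℕ) (f : ℕ → X), 1 ≤ n ∧ f 0 = x ∧ f n = y ∧
    r = ∑ i ∈ Finset.range n, deltaPhi m φ (f i) (f (i + 1)) }

/-- aₘ = 1 + 1/2 + ⋯ + 1/m. -/
noncomputable def harm (m : ℕ) : ℝ := ∑ k ∈ Finset.range m, (1 : ℝ) / (k + 1)

-- The function φ for the standard compactification of ℝˢ:
-- φ(x,y) = 0 if y = (a_q/a_p) x for some p,q ≥ 1; φ(x,y) = (1/aₘ)|x−y| if x,y
-- lie on the sphere Sₘ of radius aₘ (note ‖x‖ = aₘ there); |x−y| otherwise.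
open Classical in
noncomputable def phiStd (s : ℕ) (x y : EuclideanSpace ℝ (Fin s)) : ℝ :=
  if ∃ p q : ℕ, 1 ≤ p ∧ 1 ≤ q ∧ y = (harm q / harm p) • x then 0
  else if ∃ m : ℕ, 1 ≤ m ∧ ‖x‖ = harm m ∧ ‖y‖ = harm m then (1 / ‖x‖) * ‖x - y‖
  else ‖x - y‖

/-!
The map `toBall x = x / (1 + ‖x‖)` sends ℝˢ into the open unit ball, and a check of the three
clauses of φ shows that it is 2-Lipschitz from δ^φ, hence from the chain metric d^φ, to the
Euclidean metric. So the image of a d^φ-Cauchy sequence `u` converges to some `L` with `‖L‖ ≤ 1`.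
If `‖L‖ < 1`, then `u` itself converges in ℝˢ, hence for d^φ, to a point. If `‖L‖ = 1`, compare
`u i` with `aᵢ • L` by the chain that runs along the ray of `u i` (φ vanishes between points
`a_q / a_p`-multiples of each other, and the end points are far out) to the sphere `Sₘ`, across
`Sₘ` (where φ is the distance of the directions), and back along the ray of `L`. This gives
`d^φ(y, z) ≤ 1 / (1 + ‖y‖) + 1 / (1 + ‖z‖) + ‖y / ‖y‖ - z / ‖z‖‖`, which tends to `0`.
-/

open Filter Topology

section ToBall

variable {V : Type*} [NormedAddCommGroup V] [NormedSpace ℝ V]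

noncomputable def toBall (x : V) : V := (1 + ‖x‖)⁻¹ • x

lemma toBall_zero : toBall (0 : V) = 0 := by simp [toBall]

lemma norm_toBall (x : V) : ‖toBall x‖ = ‖x‖ / (1 + ‖x‖) := by
  rw [toBall, norm_smul, norm_inv, Real.norm_of_nonneg (by positivity), inv_mul_eq_div]

lemma one_sub_norm_toBall (x : V) : 1 - ‖toBall x‖ = 1 / (1 + ‖x‖) := by
  rw [norm_toBall]
  field_simp
  ring

lemma norm_toBall_lt_one (x : V) : ‖toBall x‖ < 1 := by
  have : 0 < 1 / (1 + ‖x‖) := by positivity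
  linarith [one_sub_norm_toBall x]

lemma inv_one_sub_norm_toBall_smul (x : V) : (1 - ‖toBall x‖)⁻¹ • toBall x = x := by
  rw [one_sub_norm_toBall, one_div, inv_inv, toBall, smul_smul,
    mul_inv_cancel₀ (by positivity), one_smul]

lemma inv_norm_toBall_smul (x : V) : ‖toBall x‖⁻¹ • toBall x = ‖x‖⁻¹ • x := by
  rcases eq_or_ne x 0 with rfl | hx
  · simp [toBall_zero]
  have : 0 < ‖x‖ := norm_pos_iff.mpr hx
  rw [norm_toBall, toBall, smul_smul]
  congr 1
  field_simp

lemma norm_toBall_sub_le (x y : V) : ‖toBall x - toBall y‖ ≤ 2 * ‖x - y‖ := by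
  set a := 1 + ‖x‖
  set b := 1 + ‖y‖
  have ha : 1 ≤ a := by simp [a]
  have hb : 0 < b := by positivity
  have hdecomp : toBall x - toBall y = a⁻¹ • (x - y) + (a⁻¹ - b⁻¹) • y := by
    simp only [toBall, a, b, smul_sub, sub_smul]
    abel
  -- `|a⁻¹ - b⁻¹| ‖y‖ = |‖y‖ - ‖x‖| / a * (‖y‖ / b)` and both fractions are at most one
  have hscal : ‖(a⁻¹ - b⁻¹) • y‖ ≤ ‖x - y‖ := by
    have hab : a⁻¹ - b⁻¹ = (‖y‖ - ‖x‖) / a * b⁻¹ := by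
      field_simp
      ring
    rw [norm_smul, hab, Real.norm_eq_abs, abs_mul, abs_div, abs_of_pos (by positivity : 0 < a),
      abs_of_pos (inv_pos.2 hb), mul_assoc]
    have h1 : |‖y‖ - ‖x‖| / a ≤ ‖x - y‖ :=
      (div_le_self (abs_nonneg _) ha).trans (norm_sub_rev x y ▸ abs_norm_sub_norm_le y x)
    have h2 : b⁻¹ * ‖y‖ ≤ 1 := by
      rw [inv_mul_le_one₀ hb]
      simp [b]
    calc |‖y‖ - ‖x‖| / a * (b⁻¹ * ‖y‖) ≤ ‖x - y‖ * 1 := by gcongr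
      _ = ‖x - y‖ := mul_one _
  have hfirst : ‖a⁻¹ • (x - y)‖ ≤ ‖x - y‖ := by
    rw [norm_smul, norm_inv, Real.norm_of_nonneg (by positivity)]
    exact inv_mul_le_of_le_mul₀ (by positivity) (by positivity) (by nlinarith [norm_nonneg (x - y)])
  rw [hdecomp]
  linarith [norm_add_le (a⁻¹ • (x - y)) ((a⁻¹ - b⁻¹) • y)]

lemma SameRay.norm_toBall_sub_le {x y : V} (h : SameRay ℝ x y) :
    ‖toBall x - toBall y‖ ≤ 1 / (1 + ‖x‖) + 1 / (1 + ‖y‖) := by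
  have hray : SameRay ℝ (toBall x) (toBall y) :=
    (h.nonneg_smul_left (by positivity)).nonneg_smul_right (by positivity)
  rw [hray.norm_sub, ← one_sub_norm_toBall, ← one_sub_norm_toBall]
  have := norm_toBall_lt_one x
  have := norm_toBall_lt_one y
  rw [abs_le]
  constructor <;> linarith [norm_nonneg (toBall x), norm_nonneg (toBall y)]

lemma norm_toBall_sub_le_of_norm_eq {x y : V} (h : ‖x‖ = ‖y‖) :
    ‖toBall x - toBall y‖ ≤ 1 / ‖x‖ * ‖x - y‖ := by
  rcases (norm_nonneg x).eq_or_lt with h0 | hpos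
  · rw [eq_comm, norm_eq_zero] at h0
    rw [h0, eq_comm, norm_zero, norm_eq_zero] at h
    simp [h0, h]
  rw [toBall, toBall, ← h, ← smul_sub, norm_smul, norm_inv, Real.norm_of_nonneg (by positivity),
    one_div]
  gcongr
  linarith

lemma tendsto_of_tendsto_toBall {ι : Type*} {l : Filter ι} {u : ι → V} {L : V} (hL : ‖L‖ < 1)
    (h : Tendsto (fun i => toBall (u i)) l (𝓝 L)) : Tendsto u l (𝓝 ((1 - ‖L‖)⁻¹ • L)) := by
  have hinv := (tendsto_const_nhds.sub h.norm).inv₀ (sub_ne_zero.2 hL.ne')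
  simpa only [inv_one_sub_norm_toBall_smul] using hinv.smul h

end ToBall

section Chains

variable {X : Type*} [MetricSpace X] (m : X) (φ : X → X → ℝ)

def chainSums (x y : X) : Set ℝ :=
  { r : ℝ | ∃ (n : ℕ) (f : ℕ → X), 1 ≤ n ∧ f 0 = x ∧ f n = y ∧
    r = ∑ i ∈ Finset.range n, deltaPhi m φ (f i) (f (i + 1)) }

lemma deltaPhi_mem_chainSums (x y : X) : deltaPhi m φ x y ∈ chainSums m φ x y :=
  ⟨1, fun i => if i = 0 then x else y, le_rfl, rfl, rfl, by simp⟩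

lemma dist_le_mul_dPhi {Y : Type*} [PseudoMetricSpace Y] {g : X → Y} {C : ℝ} (hC : 0 < C)
    (hg : ∀ a b, dist (g a) (g b) ≤ C * deltaPhi m φ a b) (x y : X) :
    dist (g x) (g y) ≤ C * dPhi m φ x y := by
  rw [mul_comm, ← div_le_iff₀ hC]
  refine le_csInf ⟨_, deltaPhi_mem_chainSums m φ x y⟩ ?_
  rintro r ⟨n, f, -, rfl, rfl, rfl⟩
  rw [div_le_iff₀ hC, Finset.sum_mul]
  refine (dist_le_range_sum_dist (g ∘ f) n).trans (Finset.sum_le_sum fun i _ => ?_)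
  rw [mul_comm]
  exact hg _ _

variable {φ} (hφ : ∀ a b, 0 ≤ φ a b)
include hφ

lemma deltaPhi_nonneg (x y : X) : 0 ≤ deltaPhi m φ x y :=
  le_min dist_nonneg (by have := hφ x y; positivity)

lemma dPhi_nonneg (x y : X) : 0 ≤ dPhi m φ x y := by
  refine le_csInf ⟨_, deltaPhi_mem_chainSums m φ x y⟩ ?_
  rintro r ⟨n, f, -, -, -, rfl⟩
  exact Finset.sum_nonneg fun i _ => deltaPhi_nonneg m hφ _ _

lemma dPhi_le_sum (f : ℕ → X) {n : ℕ} (hn : 1 ≤ n) :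
    dPhi m φ (f 0) (f n) ≤ ∑ i ∈ Finset.range n, deltaPhi m φ (f i) (f (i + 1)) := by
  refine csInf_le ⟨0, ?_⟩ ⟨n, f, hn, rfl, rfl, rfl⟩
  rintro r ⟨n, f, -, -, -, rfl⟩
  exact Finset.sum_nonneg fun i _ => deltaPhi_nonneg m hφ _ _

lemma dPhi_le_dist (x y : X) : dPhi m φ x y ≤ dist x y := by
  have := dPhi_le_sum m hφ (fun i => if i = 0 then x else y) le_rfl
  simp only [Finset.sum_range_one] at this
  exact this.trans (min_le_left _ _)

lemma tendsto_dPhi_of_tendsto {ι : Type*} {l : Filter ι} {u : ι → X} {c : X}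
    (h : Tendsto u l (𝓝 c)) : Tendsto (fun i => dPhi m φ (u i) c) l (𝓝 0) :=
  squeeze_zero (fun _ => dPhi_nonneg m hφ _ _) (fun _ => dPhi_le_dist m hφ _ _)
    (tendsto_iff_dist_tendsto_zero.mp h)

end Chains

section Harmonic

lemma harm_zero : harm 0 = 0 := by simp [harm]

lemma harm_succ (m : ℕ) : harm (m + 1) = harm m + 1 / (m + 1) := Finset.sum_range_succ _ m

lemma harm_pos {m : ℕ} (hm : 1 ≤ m) : 0 < harm m :=
  Finset.sum_pos (fun k _ => by positivity) (Finset.nonempty_range_iff.2 (by omega))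

lemma tendsto_harm_atTop : Tendsto harm atTop atTop :=
  Real.tendsto_sum_range_one_div_nat_succ_atTop

-- the increments `1 / (k + 1)` of `harm` are at most one
lemma exists_harm_mem_Ico {T : ℝ} (hT : 0 ≤ T) : ∃ q, T ≤ harm q ∧ harm q < T + 1 := by
  classical
  have hex : ∃ q, T ≤ harm q := (tendsto_harm_atTop.eventually_ge_atTop T).exists
  refine ⟨Nat.find hex, Nat.find_spec hex, ?_⟩
  rcases h : Nat.find hex with _ | k
  · rw [harm_zero]
    linarith
  · have hk : harm k < T := not_le.1 (Nat.find_min hex (by omega))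
    have : (1 : ℝ) / (k + 1) ≤ 1 := by
      rw [div_le_one (by positivity)]
      linarith [k.cast_nonneg (α := ℝ)]
    rw [harm_succ]
    linarith

lemma exists_harm_div_harm_mem_Ico {r ε : ℝ} (hr : 0 < r) (hε : 0 < ε) :
    ∃ p q, 1 ≤ p ∧ 1 ≤ q ∧ r ≤ harm q / harm p ∧ harm q / harm p < r + ε := by
  obtain ⟨p, hpε, hp⟩ :=
    ((tendsto_harm_atTop.eventually_gt_atTop (1 / ε)).and (eventually_ge_atTop 1)).exists
  have hp0 := harm_pos hp
  obtain ⟨q, hTq, hqT⟩ := exists_harm_mem_Ico (by positivity : 0 ≤ r * harm p)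
  have hq : 1 ≤ q := by
    by_contra! h
    rw [Nat.lt_one_iff.1 h, harm_zero] at hTq
    nlinarith
  refine ⟨p, q, hp, hq, (le_div_iff₀ hp0).2 hTq, (div_lt_iff₀ hp0).2 ?_⟩
  have : 1 < ε * harm p := by rwa [div_lt_iff₀' hε] at hpε
  linarith

end Harmonic

section PhiStd

variable {s : ℕ}

lemma phiStd_nonneg (x y : EuclideanSpace ℝ (Fin s)) : 0 ≤ phiStd s x y := by
  unfold phiStd
  split_ifs <;> positivity

lemma phiStd_harm_div_smul_right (x : EuclideanSpace ℝ (Fin s)) {p q : ℕ} (hp : 1 ≤ p)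
    (hq : 1 ≤ q) : phiStd s x ((harm q / harm p) • x) = 0 :=
  if_pos ⟨p, q, hp, hq, rfl⟩

lemma phiStd_harm_div_smul_left (x : EuclideanSpace ℝ (Fin s)) {p q : ℕ} (hp : 1 ≤ p)
    (hq : 1 ≤ q) : phiStd s ((harm q / harm p) • x) x = 0 := by
  have hx : x = (harm p / harm q) • (harm q / harm p) • x := by
    have := (harm_pos hp).ne'
    have := (harm_pos hq).ne'
    rw [smul_smul, show harm p / harm q * (harm q / harm p) = 1 by field_simp, one_smul]
  exact if_pos ⟨q, p, hq, hp, hx⟩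

lemma phiStd_harm_smul_le {u v : EuclideanSpace ℝ (Fin s)} (hu : ‖u‖ = 1) (hv : ‖v‖ = 1)
    {m : ℕ} (hm : 1 ≤ m) : phiStd s (harm m • u) (harm m • v) ≤ ‖u - v‖ := by
  have hm0 := harm_pos hm
  have hnorm {w : EuclideanSpace ℝ (Fin s)} (hw : ‖w‖ = 1) : ‖harm m • w‖ = harm m := by
    rw [norm_smul, hw, Real.norm_of_nonneg hm0.le, mul_one]
  unfold phiStd
  split_ifs with hray hsphere
  · positivity
  · rw [hnorm hu, ← smul_sub, norm_smul, Real.norm_of_nonneg hm0.le, one_div,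
      inv_mul_cancel_left₀ hm0.ne']
  · exact absurd ⟨m, hm, hnorm hu, hnorm hv⟩ hsphere

lemma norm_toBall_sub_le_phiStd (x y : EuclideanSpace ℝ (Fin s)) :
    ‖toBall x - toBall y‖ ≤ 2 * (1 / (1 + ‖x‖) + phiStd s x y + 1 / (1 + ‖y‖)) := by
  have hx : 0 < 1 / (1 + ‖x‖) := by positivity
  have hy : 0 < 1 / (1 + ‖y‖) := by positivity
  unfold phiStd
  split_ifs with hray hsphere
  · obtain ⟨p, q, hp, hq, rfl⟩ := hray
    have := (SameRay.sameRay_nonneg_smul_right x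
      (div_pos (harm_pos hq) (harm_pos hp)).le).norm_toBall_sub_le
    linarith
  · obtain ⟨m, -, hxm, hym⟩ := hsphere
    have := norm_toBall_sub_le_of_norm_eq (hxm.trans hym.symm)
    have : 0 ≤ 1 / ‖x‖ * ‖x - y‖ := by positivity
    linarith
  · linarith [norm_toBall_sub_le x y]

lemma dist_toBall_le_dPhi (x y : EuclideanSpace ℝ (Fin s)) :
    dist (toBall x) (toBall y) ≤ 2 * dPhi 0 (phiStd s) x y := by
  refine dist_le_mul_dPhi 0 (phiStd s) two_pos (fun a b => ?_) x y
  rw [deltaPhi, mul_min_of_nonneg _ _ zero_le_two, dist_zero_left, dist_zero_left, dist_eq_norm,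
    dist_eq_norm]
  exact le_min (norm_toBall_sub_le a b) (norm_toBall_sub_le_phiStd a b)

lemma exists_harm_div_smul_near_sphere {y : EuclideanSpace ℝ (Fin s)} (hy : y ≠ 0) {m : ℕ}
    (hm : 1 ≤ m) {ε : ℝ} (hε : 0 < ε) :
    ∃ p q, 1 ≤ p ∧ 1 ≤ q ∧ harm m ≤ ‖(harm q / harm p) • y‖ ∧
      dist ((harm q / harm p) • y) (harm m • ‖y‖⁻¹ • y) < ε := by
  have hy0 : 0 < ‖y‖ := norm_pos_iff.2 hy
  obtain ⟨p, q, hp, hq, hlo, hhi⟩ :=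
    exists_harm_div_harm_mem_Ico (div_pos (harm_pos hm) hy0) (div_pos hε hy0)
  have hc : 0 ≤ harm q / harm p := (div_pos (harm_pos hq) (harm_pos hp)).le
  refine ⟨p, q, hp, hq, ?_, ?_⟩
  · rw [norm_smul, Real.norm_of_nonneg hc, ← div_le_iff₀ hy0]
    exact hlo
  · rw [smul_smul, ← div_eq_mul_inv, dist_eq_norm, ← sub_smul, norm_smul,
      Real.norm_of_nonneg (sub_nonneg.2 hlo), ← lt_div_iff₀ hy0]
    linarith

lemma dPhi_phiStd_le {y z : EuclideanSpace ℝ (Fin s)} (hy : y ≠ 0) (hz : z ≠ 0) :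
    dPhi 0 (phiStd s) y z ≤ 1 / (1 + ‖y‖) + 1 / (1 + ‖z‖) + ‖‖y‖⁻¹ • y - ‖z‖⁻¹ • z‖ := by
  refine le_of_forall_pos_lt_add fun ε hε => ?_
  obtain ⟨m, hmε, hm⟩ := ((tendsto_harm_atTop.eventually_gt_atTop (8 / ε)).and
    (eventually_ge_atTop 1)).exists
  have hm0 := harm_pos hm
  have hsmall : 1 / (1 + harm m) < ε / 8 := by
    rw [div_lt_div_iff₀ (by positivity) (by norm_num)]
    rw [div_lt_iff₀ hε] at hmε
    linarith
  obtain ⟨p, q, hp, hq, hy₁, hyy⟩ :=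
    exists_harm_div_smul_near_sphere hy hm (by positivity : 0 < ε / 4)
  obtain ⟨p', q', hp', hq', hz₁, hzz⟩ :=
    exists_harm_div_smul_near_sphere hz hm (by positivity : 0 < ε / 4)
  have hunit {w : EuclideanSpace ℝ (Fin s)} (hw : w ≠ 0) : ‖‖w‖⁻¹ • w‖ = 1 :=
    norm_smul_inv_norm (𝕜 := ℝ) hw
  have hsphere {w : EuclideanSpace ℝ (Fin s)} (hw : w ≠ 0) : ‖harm m • ‖w‖⁻¹ • w‖ = harm m := by
    rw [norm_smul, hunit hw, Real.norm_of_nonneg hm0.le, mul_one]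
  have hfar {w : EuclideanSpace ℝ (Fin s)} (hw : harm m ≤ ‖w‖) :
      1 / (1 + ‖w‖) ≤ 1 / (1 + harm m) :=
    one_div_le_one_div_of_le (by positivity) (by linarith)
  set y₁ := (harm q / harm p) • y
  set y₂ := harm m • ‖y‖⁻¹ • y
  set z₂ := harm m • ‖z‖⁻¹ • z
  set z₁ := (harm q' / harm p') • z
  -- go out along the ray of `y`, round the sphere of radius `harm m`, and back along the ray of `z`
  have hchain :=
    dPhi_le_sum 0 phiStd_nonneg ([y, y₁, y₂, z₂, z₁, z].getD · 0) (n := 5) le_add_self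
  simp only [Finset.sum_range_succ, Finset.sum_range_zero, List.getD_cons_zero,
    List.getD_cons_succ, zero_add] at hchain
  have h₁ : deltaPhi 0 (phiStd s) y y₁ ≤ 1 / (1 + ‖y‖) + 1 / (1 + harm m) := by
    refine (min_le_right _ _).trans ?_
    rw [dist_zero_left, dist_zero_left, phiStd_harm_div_smul_right y hp hq]
    linarith [hfar hy₁]
  have h₂ : deltaPhi 0 (phiStd s) y₁ y₂ < ε / 4 := (min_le_left _ _).trans_lt hyy
  have h₃ : deltaPhi 0 (phiStd s) y₂ z₂ ≤
      1 / (1 + harm m) + ‖‖y‖⁻¹ • y - ‖z‖⁻¹ • z‖ + 1 / (1 + harm m) := by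
    refine (min_le_right _ _).trans ?_
    have hangle : phiStd s y₂ z₂ ≤ ‖‖y‖⁻¹ • y - ‖z‖⁻¹ • z‖ :=
      phiStd_harm_smul_le (hunit hy) (hunit hz) hm
    rw [dist_zero_left, dist_zero_left, hsphere hy, hsphere hz]
    linarith
  have h₄ : deltaPhi 0 (phiStd s) z₂ z₁ < ε / 4 :=
    (min_le_left _ _).trans_lt (dist_comm z₂ z₁ ▸ hzz)
  have h₅ : deltaPhi 0 (phiStd s) z₁ z ≤ 1 / (1 + harm m) + 1 / (1 + ‖z‖) := by
    refine (min_le_right _ _).trans ?_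
    rw [dist_zero_left, dist_zero_left, phiStd_harm_div_smul_left z hp' hq']
    linarith [hfar hz₁]
  linarith

lemma tendsto_dPhi_harm_smul {u : ℕ → EuclideanSpace ℝ (Fin s)} {L : EuclideanSpace ℝ (Fin s)}
    (hL : ‖L‖ = 1) (h : Tendsto (fun i => toBall (u i)) atTop (𝓝 L)) :
    Tendsto (fun i => dPhi 0 (phiStd s) (u i) (harm i • L)) atTop (𝓝 0) := by
  have hlim : Tendsto (fun i => (1 - ‖toBall (u i)‖) + 1 / (1 + harm i) +
      ‖‖toBall (u i)‖⁻¹ • toBall (u i) - L‖) atTop (𝓝 0) := by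
    have h₁ : Tendsto (fun i => 1 - ‖toBall (u i)‖) atTop (𝓝 0) := by
      simpa [hL] using (tendsto_const_nhds (x := (1 : ℝ))).sub h.norm
    have h₂ : Tendsto (fun i => 1 / (1 + harm i)) atTop (𝓝 0) :=
      tendsto_const_nhds.div_atTop (tendsto_atTop_add_const_left _ 1 tendsto_harm_atTop)
    have h₃ : Tendsto (fun i => ‖‖toBall (u i)‖⁻¹ • toBall (u i) - L‖) atTop (𝓝 0) := by
      simpa [hL] using
        (((h.norm.inv₀ (by simp [hL])).smul h).sub (tendsto_const_nhds (x := L))).norm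
    simpa using (h₁.add h₂).add h₃
  refine squeeze_zero' (Eventually.of_forall fun i => dPhi_nonneg 0 phiStd_nonneg _ _) ?_ hlim
  filter_upwards [h.norm.eventually (eventually_gt_nhds (by simp [hL] : (0 : ℝ) < ‖L‖)),
    eventually_ge_atTop 1] with i hi hi1
  have hu : u i ≠ 0 := by
    intro hu
    simp [hu, toBall_zero] at hi
  have hm0 := harm_pos hi1
  have hnorm : ‖harm i • L‖ = harm i := by rw [norm_smul, hL, Real.norm_of_nonneg hm0.le, mul_one]
  have hunit : ‖harm i • L‖⁻¹ • harm i • L = L := by rw [hnorm, inv_smul_smul₀ hm0.ne']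
  have := dPhi_phiStd_le hu (by rw [← norm_ne_zero_iff, hnorm]; exact hm0.ne')
  rwa [hunit, hnorm, ← one_sub_norm_toBall, ← inv_norm_toBall_smul] at this

end PhiStd

theorem stmt12_general (s : ℕ) (u : ℕ → EuclideanSpace ℝ (Fin s))
    (hcauchy : ∀ ε > (0 : ℝ), ∃ N : ℕ, ∀ i ≥ N, ∀ j ≥ N,
      dPhi (0 : EuclideanSpace ℝ (Fin s)) (phiStd s) (u i) (u j) < ε)
    (hnconst : ¬ ∃ c : EuclideanSpace ℝ (Fin s),
      Filter.Tendsto (fun i => dPhi (0 : EuclideanSpace ℝ (Fin s)) (phiStd s) (u i) c)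
        Filter.atTop (nhds 0)) :
    ∃ x : EuclideanSpace ℝ (Fin s), ‖x‖ = 1 ∧
      Filter.Tendsto (fun i => dPhi (0 : EuclideanSpace ℝ (Fin s)) (phiStd s) (u i) (harm i • x))
        Filter.atTop (nhds 0) := by
  have hcauchy' : CauchySeq fun i => toBall (u i) := by
    refine Metric.cauchySeq_iff.2 fun ε hε => ?_
    obtain ⟨N, hN⟩ := hcauchy (ε / 2) (half_pos hε)
    exact ⟨N, fun i hi j hj => by linarith [dist_toBall_le_dPhi (u i) (u j), hN i hi j hj]⟩
  obtain ⟨L, hL⟩ := cauchySeq_tendsto_of_complete hcauchy'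
  rcases (le_of_tendsto' hL.norm fun i => (norm_toBall_lt_one (u i)).le).lt_or_eq with hlt | heq
  · exact absurd ⟨_, tendsto_dPhi_of_tendsto 0 phiStd_nonneg (tendsto_of_tendsto_toBall hlt hL)⟩
      hnconst
  · exact ⟨L, heq, tendsto_dPhi_harm_smul heq hL⟩

/-- Every Cauchy sequence in (ℝˢ, d^φ) not equivalent to a constant Cauchy
sequence is equivalent to (aᵢ • x) for some unit vector x
(equivalence: d^φ of corresponding terms tends to 0). -/
theorem stmt12 (s : ℕ) (hs : 2 ≤ s) (u : ℕ → EuclideanSpace ℝ (Fin s))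
    (hcauchy : ∀ ε > (0 : ℝ), ∃ N : ℕ, ∀ i ≥ N, ∀ j ≥ N,
      dPhi (0 : EuclideanSpace ℝ (Fin s)) (phiStd s) (u i) (u j) < ε)
    (hnconst : ¬ ∃ c : EuclideanSpace ℝ (Fin s),
      Filter.Tendsto (fun i => dPhi (0 : EuclideanSpace ℝ (Fin s)) (phiStd s) (u i) c)
        Filter.atTop (nhds 0)) :
    ∃ x : EuclideanSpace ℝ (Fin s), ‖x‖ = 1 ∧
      Filter.Tendsto (fun i => dPhi (0 : EuclideanSpace ℝ (Fin s)) (phiStd s) (u i) (harm i • x))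
        Filter.atTop (nhds 0) :=
  stmt12_general s u hcauchy hnconst
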